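/- Let (aᵢ) be a nondecreasing finite sequence of positive reals, and let 0 < q < 1. Then ∑_{i=0}^{n-1} aᵢ (aᵢ^{q-1} - a_{i+1}^{q-1}) ≤ ((1-q)/q) · aₙ^q. -/

import Mathlib

/-!
Each summand is bounded by the increment `(1 - q) / q * (a_{i+1} ^ q - a_i ^ q)`: with `x = a_i`,
`y = a_{i+1}` this is `x ^ q ≤ y ^ (q - 1) * ((1 - q) * y + q * x)`, which is the weighted AM-GM
inequality `y ^ (1 - q) * x ^ q ≤ (1 - q) * y + q * x`. The bounds telescope to
`(1 - q) / q * (a_n ^ q - a_0 ^ q)`.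
-/

open Finset

lemma Fin.sum_univ_succ_sub_castSucc {M : Type*} [AddCommGroup M] (n : ℕ) (g : Fin (n + 1) → M) :
    ∑ i : Fin n, (g i.succ - g i.castSucc) = g (Fin.last n) - g 0 := by
  have h := (Fin.sum_univ_succ g).symm.trans (Fin.sum_univ_castSucc g)
  rw [sum_sub_distrib, sub_eq_sub_iff_add_eq_add, add_comm, h, add_comm]

namespace Real

lemma rpow_le_rpow_sub_one_mul {x y q : ℝ} (hx : 0 ≤ x) (hy : 0 < y) (hq0 : 0 ≤ q) (hq1 : q ≤ 1) :
    x ^ q ≤ y ^ (q - 1) * ((1 - q) * y + q * x) := by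
  have amgm : y ^ (1 - q) * x ^ q ≤ (1 - q) * y + q * x :=
    geom_mean_le_arith_mean2_weighted (by linarith) hq0 hy.le hx (by ring)
  have hy_pow : y ^ (q - 1) * y ^ (1 - q) = 1 := by
    rw [← rpow_add hy]; simp
  calc x ^ q = y ^ (q - 1) * (y ^ (1 - q) * x ^ q) := by rw [← mul_assoc, hy_pow, one_mul]
    _ ≤ y ^ (q - 1) * ((1 - q) * y + q * x) := by gcongr

lemma mul_sub_rpow_sub_one_le {x y q : ℝ} (hx : 0 < x) (hy : 0 < y) (hq0 : 0 < q) (hq1 : q ≤ 1) :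
    x * (x ^ (q - 1) - y ^ (q - 1)) ≤ (1 - q) / q * (y ^ q - x ^ q) := by
  have hx_pow : x * x ^ (q - 1) = x ^ q := by
    rw [mul_comm, rpow_sub_one hx.ne', div_mul_cancel₀ _ hx.ne']
  have hy_pow : y * y ^ (q - 1) = y ^ q := by
    rw [mul_comm, rpow_sub_one hy.ne', div_mul_cancel₀ _ hy.ne']
  have key := rpow_le_rpow_sub_one_mul hx.le hy hq0.le hq1
  rw [div_mul_eq_mul_div, le_div_iff₀ hq0]
  nlinarith

end Real

theorem stmt_3_general (n : ℕ) (a : Fin (n + 1) → ℝ) (hpos : ∀ i, 0 < a i)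
    (q : ℝ) (hq0 : 0 < q) (hq1 : q < 1) :
    ∑ i : Fin n, a i.castSucc * (a i.castSucc ^ (q - 1) - a i.succ ^ (q - 1)) ≤
      (1 - q) / q * a (Fin.last n) ^ q := by
  set F : Fin (n + 1) → ℝ := fun j => (1 - q) / q * a j ^ q
  have h_terms : ∑ i : Fin n, a i.castSucc * (a i.castSucc ^ (q - 1) - a i.succ ^ (q - 1)) ≤
      ∑ i : Fin n, (F i.succ - F i.castSucc) := by
    gcongr with i
    simpa only [F, mul_sub] using
      Real.mul_sub_rpow_sub_one_le (hpos i.castSucc) (hpos i.succ) hq0 hq1.le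
  have hF0 : 0 ≤ F 0 := by
    have := hpos 0
    have : 0 ≤ 1 - q := by linarith
    positivity
  rw [Fin.sum_univ_succ_sub_castSucc] at h_terms
  linarith

theorem stmt_3 (n : ℕ) (a : Fin (n + 1) → ℝ) (ha : Monotone a) (hpos : ∀ i, 0 < a i)
    (q : ℝ) (hq0 : 0 < q) (hq1 : q < 1) :
    ∑ i : Fin n, a i.castSucc * (a i.castSucc ^ (q - 1) - a i.succ ^ (q - 1)) ≤
      (1 - q) / q * a (Fin.last n) ^ q :=
  stmt_3_general n a hpos q hq0 hq1
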